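/- Let K be a field, ℓ a prime, and v a valuation of K with valuation ring O_v, maximal ideal m_v, residue field k(v) and value group Γ_v. Assume Γ_v has no nontrivial ℓ-divisible convex subgroup. Let T be a subgroup of K^× with 𝔘_v^1 ⊆ T ⊆ 𝔘_v, and let T_v be the image of T ∩ O_v^× under the residue map O_v^× → k(v)^×. Then: (a) T is rigid (as a subgroup of K^×) if and only if T_v is rigid (as a subgroup of k(v)^×); and (b) T is valuative if and only if T_v is valuative. -/

import Mathlib

/-!
The residue map `O_v^× → k(v)^×` has the principal units as kernel, and these lie in `T`
because `1 + m_v ⊆ T`; hence it induces an isomorphism `O_v^×/(T ∩ O_v^×) ≅ k(v)^×/T_v`.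

(a) If `x ∉ T` is not a unit of `O_v`, then `1 - x` is trivial modulo `T` (when `v x < 1`)
or congruent to `x` (when `v x > 1`, as `1 - x = -x (1 - x⁻¹)`), so the pair generates a cyclic
group. If `x` is a unit with `x̄ ≠ 1`, then `1 - x` is a unit too, and the isomorphism carries
the subgroup generated by `x, 1 - x` onto the one generated by `x̄, 1 - x̄`.

(b) A valuation ring `Ō` of `k(v)` with `Ō^× ⊆ T_v` pulls back to the valuation ring
`{x ∈ O_v | x̄ ∈ Ō}`, whose units lie in `T`. Conversely, if `O'^× ⊆ T`, the hypothesis on `Γ_v`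
forces `O' ⊆ O_v`, and the image of `O'` in `k(v)` is a valuation ring with units in `T_v`.
-/

/-- A subgroup `T ≤ F^×` is rigid if for every `x ∈ F^× \ T` the
subgroup of `F^×/T` generated by the images of `x` and `1 - x` is cyclic. -/
def IsRigid {F : Type*} [Field F] (T : Subgroup Fˣ) : Prop :=
  ∀ x : Fˣ, x ∉ T → ∀ h : (1 : F) - (x : F) ≠ 0,
    IsCyclic ↥(Subgroup.closure {(QuotientGroup.mk x : Fˣ ⧸ T),
      QuotientGroup.mk (Units.mk0 ((1 : F) - (x : F)) h)})

/-- A subgroup `H ≤ F^×` is valuative if it contains the unit group of a valuation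
subring of `F`. -/
def IsValuative {F : Type*} [Field F] (H : Subgroup Fˣ) : Prop :=
  ∃ O : ValuationSubring F, O.unitGroup ≤ H

/-- The subgroup `F^{×ℓ}` of `ℓ`-th powers of `F^×`. -/
def powSub (F : Type*) [Field F] (ℓ : ℕ) : Subgroup Fˣ :=
  MonoidHom.range (powMonoidHom ℓ : Fˣ →* Fˣ)

/-- `Γ_v = K^×/O_v^×` has no nontrivial `ℓ`-divisible convex subgroup: encoded via
subgroups `D` of `K^×` containing `O_v^×` (which correspond to the subgroups of `Γ_v`),
convexity and `ℓ`-divisibility being stated through the valuation. -/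
def NoLDivConvex {K : Type*} [Field K] (ℓ : ℕ) (O : ValuationSubring K) : Prop :=
  ∀ D : Subgroup Kˣ, O.unitGroup ≤ D →
    (∀ x ∈ D, ∀ y : Kˣ, 1 ≤ O.valuation (y : K) →
      O.valuation (y : K) ≤ O.valuation (x : K) → y ∈ D) →
    (∀ x ∈ D, ∃ z ∈ D, z ^ ℓ / x ∈ O.unitGroup) →
    D = O.unitGroup

/-- The subgroup `𝔘_v = O_v^× · K^{×ℓ}` of `K^×`. -/
noncomputable def Uv {K : Type*} [Field K] (ℓ : ℕ) (O : ValuationSubring K) : Subgroup Kˣ :=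
  O.unitGroup ⊔ powSub K ℓ

/-- The subgroup `𝔘_v^1 = ⟨1 + m_v, -1, K^{×ℓ}⟩` of `K^×`. -/
def U1v {K : Type*} [Field K] (ℓ : ℕ) (O : ValuationSubring K) : Subgroup Kˣ :=
  Subgroup.closure {u : Kˣ | ∃ a : K, O.valuation a < 1 ∧ (u : K) = 1 + a} ⊔
    Subgroup.closure {(-1 : Kˣ)} ⊔ powSub K ℓ

/-- The image `T_v` of `T ∩ O_v^×` in `k(v)^×` under the residue map. -/
noncomputable def Tv {K : Type*} [Field K] (O : ValuationSubring K) (T : Subgroup Kˣ) :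
    Subgroup (IsLocalRing.ResidueField O)ˣ :=
  Subgroup.map O.unitGroupToResidueFieldUnits ((T ⊓ O.unitGroup).subgroupOf O.unitGroup)

section CyclicSubgroups

variable {G : Type*} [Group G]

theorem isCyclic_closure_pair_of_mem_zpowers {a b : G} (h : b ∈ Subgroup.zpowers a) :
    IsCyclic (Subgroup.closure {a, b}) :=
  Subgroup.isCyclic_of_le (H' := Subgroup.zpowers a) <| Subgroup.closure_le _ |>.2 <|
    Set.insert_subset_iff.2 ⟨Subgroup.mem_zpowers a, Set.singleton_subset_iff.2 h⟩

theorem isCyclic_map_of_ker_le {H H' : Type*} [Group H] [Group H'] {f : G →* H} {g : G →* H'}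
    (hker : f.ker ≤ g.ker) (N : Subgroup G) [IsCyclic (N.map f)] : IsCyclic (N.map g) := by
  have hN : (f.subgroupMap N).ker ≤ (g.subgroupMap N).ker := by
    rw [Subgroup.ker_subgroupMap, Subgroup.ker_subgroupMap]
    exact Subgroup.subgroupOf_mono N hker
  let e := QuotientGroup.quotientKerEquivOfSurjective _ (f.subgroupMap_surjective N)
  have : IsCyclic (N ⧸ (f.subgroupMap N).ker) := isCyclic_of_surjective e.symm e.symm.surjective
  exact isCyclic_of_surjective _
    (QuotientGroup.lift_surjective_of_surjective _ _ (g.subgroupMap_surjective N) hN)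

end CyclicSubgroups

open IsLocalRing

namespace ValuationSubring

variable {K : Type*} [Field K]

theorem mem_unitGroup_iff_mem_and_inv_mem (A : ValuationSubring K) (x : Kˣ) :
    x ∈ A.unitGroup ↔ (x : K) ∈ A ∧ (x : K)⁻¹ ∈ A := by
  rw [mem_unitGroup_iff, ← A.valuation_le_one_iff, ← A.valuation_le_one_iff, map_inv₀,
    inv_le_one₀ (A.valuation.pos_iff.2 x.ne_zero)]
  exact ⟨fun h => ⟨h.le, h.ge⟩, fun h => le_antisymm h.1 h.2⟩

variable (O : ValuationSubring K)

theorem coe_unitGroupToResidueFieldUnits_inv (u : O.unitGroup) :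
    (O.unitGroupToResidueFieldUnits u⁻¹ : ResidueField O) =
      (O.unitGroupToResidueFieldUnits u : ResidueField O)⁻¹ := by
  rw [map_inv, Units.val_inv_eq_inv_val]

theorem coe_inv_unitGroup (u : O.unitGroup) :
    (((u⁻¹ : O.unitGroup) : Kˣ) : K) = ((u : Kˣ) : K)⁻¹ := by
  simp

theorem residue_eq_zero_of_valuation_lt_one {x : K} (hx : O.valuation x < 1) :
    residue O ⟨x, O.mem_of_valuation_le_one x hx.le⟩ = 0 :=
  (residue_eq_zero_iff _).2 ((O.valuation_lt_one_iff _).2 hx)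

theorem exists_unitGroup_eq_one_sub (u : O.unitGroup)
    (hu : (O.unitGroupToResidueFieldUnits u : ResidueField O) ≠ 1) :
    ∃ w : O.unitGroup, ((w : Kˣ) : K) = 1 - (u : Kˣ) ∧
      (O.unitGroupToResidueFieldUnits w : ResidueField O) =
        1 - O.unitGroupToResidueFieldUnits u := by
  let a : O := 1 - ⟨_, O.mem_of_valuation_le_one _ u.2.le⟩
  have ha : residue O a = 1 - O.unitGroupToResidueFieldUnits u := by
    rw [map_sub, map_one]; rfl
  have hunit : IsUnit a := (residue_ne_zero_iff_isUnit a).1 (by rwa [ha, sub_ne_zero, ne_comm])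
  refine ⟨O.unitGroupMulEquiv.symm hunit.unit, rfl, ?_⟩
  rw [← ha, coe_unitGroupToResidueFieldUnits_apply, MulEquiv.apply_symm_apply]
  rfl

section comapResidue

variable (Ob : ValuationSubring (ResidueField O))

theorem coe_mem_map_comap_residue_iff (y : O) :
    (y : K) ∈ (Ob.toSubring.comap (residue O)).map O.subtype ↔ residue O y ∈ Ob := by
  refine ⟨?_, fun h => ⟨y, h, rfl⟩⟩
  rintro ⟨z, hz, hzy⟩
  rwa [← Subtype.ext hzy]

theorem coe_unitGroup_mem_map_comap_residue_iff (u : O.unitGroup) :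
    ((u : Kˣ) : K) ∈ (Ob.toSubring.comap (residue O)).map O.subtype ↔
      (O.unitGroupToResidueFieldUnits u : ResidueField O) ∈ Ob :=
  coe_mem_map_comap_residue_iff O Ob ⟨_, O.mem_of_valuation_le_one _ u.2.le⟩

/-- The composite of `O` with a valuation ring `Ob` of its residue field. -/
def comapResidue : ValuationSubring K where
  toSubring := (Ob.toSubring.comap (residue O)).map O.subtype
  mem_or_inv_mem' x := by
    have of_lt_one {y : K} (hy : O.valuation y < 1) :
        y ∈ (Ob.toSubring.comap (residue O)).map O.subtype :=
      (coe_mem_map_comap_residue_iff O Ob ⟨y, _⟩).2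
        (by rw [residue_eq_zero_of_valuation_lt_one O hy]; exact Ob.zero_mem)
    rcases eq_or_ne x 0 with rfl | hx
    · exact Or.inl (Subring.zero_mem _)
    rcases lt_trichotomy (O.valuation x) 1 with hlt | heq | hgt
    · exact Or.inl (of_lt_one hlt)
    · let u : O.unitGroup := ⟨Units.mk0 x hx, heq⟩
      refine (Ob.mem_or_inv_mem (O.unitGroupToResidueFieldUnits u)).imp ?_ ?_
      · exact (coe_unitGroup_mem_map_comap_residue_iff O Ob u).2
      · rw [← coe_unitGroupToResidueFieldUnits_inv]
        intro h
        have := (coe_unitGroup_mem_map_comap_residue_iff O Ob u⁻¹).2 h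
        rwa [coe_inv_unitGroup] at this
    · refine Or.inr (of_lt_one ?_)
      rwa [map_inv₀, inv_lt_one₀ (O.valuation.pos_iff.2 hx)]

theorem comapResidue_le : O.comapResidue Ob ≤ O := by
  rintro _ ⟨y, -, rfl⟩
  exact y.2

theorem unitGroupToResidueFieldUnits_mem_unitGroup {u : O.unitGroup}
    (hu : (u : Kˣ) ∈ (O.comapResidue Ob).unitGroup) :
    O.unitGroupToResidueFieldUnits u ∈ Ob.unitGroup := by
  rw [mem_unitGroup_iff_mem_and_inv_mem, ← coe_inv_unitGroup] at hu
  rw [mem_unitGroup_iff_mem_and_inv_mem, ← coe_unitGroupToResidueFieldUnits_inv]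
  exact ⟨(coe_unitGroup_mem_map_comap_residue_iff O Ob u).1 hu.1,
    (coe_unitGroup_mem_map_comap_residue_iff O Ob u⁻¹).1 hu.2⟩

end comapResidue

section mapResidue

variable {O} {O' : ValuationSubring K}

theorem coe_unitGroup_mem_iff_mem_map_residue (h : O' ≤ O) (u : O.unitGroup) :
    ((u : Kˣ) : K) ∈ O' ↔
      (O.unitGroupToResidueFieldUnits u : ResidueField O) ∈
        (O'.toSubring.comap O.subtype).map (residue O) := by
  refine ⟨fun hu => ⟨⟨_, O.mem_of_valuation_le_one _ u.2.le⟩, hu, rfl⟩, ?_⟩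
  rintro ⟨y, hy, hres⟩
  -- `u - y` lies in the maximal ideal of `O`, which is contained in `O'`
  have hsub : ((u : Kˣ) : K) - y ∈ O' := by
    refine O'.nonunits_subset (nonunits_le_nonunits.2 h ?_)
    have := coe_mem_nonunits_iff.2 <|
      (residue_eq_zero_iff ((⟨_, O.mem_of_valuation_le_one _ u.2.le⟩ : O) - y)).1
        (by rw [map_sub, hres]; exact sub_eq_zero.2 rfl)
    simpa using this
  simpa using O'.add_mem _ _ hsub hy

noncomputable def mapResidue (h : O' ≤ O) : ValuationSubring (ResidueField O) where
  toSubring := (O'.toSubring.comap O.subtype).map (residue O)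
  mem_or_inv_mem' r := by
    rcases eq_or_ne r 0 with rfl | hr
    · exact Or.inl (Subring.zero_mem _)
    obtain ⟨u, hu⟩ := O.surjective_unitGroupToResidueFieldUnits (Units.mk0 r hr)
    have hr : r = O.unitGroupToResidueFieldUnits u := by rw [hu]; rfl
    rw [hr, ← coe_unitGroupToResidueFieldUnits_inv]
    refine (O'.mem_or_inv_mem ((u : Kˣ) : K)).imp ?_ ?_
    · exact (coe_unitGroup_mem_iff_mem_map_residue h u).1
    · rw [← coe_inv_unitGroup]
      exact (coe_unitGroup_mem_iff_mem_map_residue h u⁻¹).1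

theorem exists_unitGroupToResidueFieldUnits_eq (h : O' ≤ O) {ξ : (ResidueField O)ˣ}
    (hξ : ξ ∈ (mapResidue h).unitGroup) :
    ∃ u : O.unitGroup, (u : Kˣ) ∈ O'.unitGroup ∧ O.unitGroupToResidueFieldUnits u = ξ := by
  obtain ⟨u, rfl⟩ := O.surjective_unitGroupToResidueFieldUnits ξ
  refine ⟨u, ?_, rfl⟩
  rw [mem_unitGroup_iff_mem_and_inv_mem, ← coe_unitGroupToResidueFieldUnits_inv] at hξ
  rw [mem_unitGroup_iff_mem_and_inv_mem, ← coe_inv_unitGroup]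
  exact ⟨(coe_unitGroup_mem_iff_mem_map_residue h u).2 hξ.1,
    (coe_unitGroup_mem_iff_mem_map_residue h u⁻¹).2 hξ.2⟩

end mapResidue

section Convexity

variable {O} {O' : ValuationSubring K}

theorem exists_mem_unitGroup_valuation_eq_of_valuation_lt_one {y : Kˣ}
    (hy' : O'.valuation (y : K) < 1) (hy : 1 ≤ O.valuation (y : K)) :
    ∃ t ∈ O'.unitGroup, O.valuation (t : K) = O.valuation (y : K) := by
  rcases hy.eq_or_lt with heq | hlt
  · exact ⟨1, O'.unitGroup.one_mem, by rw [Units.val_one, map_one, heq]⟩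
  have hne : (1 : K) - y ≠ 0 :=
    sub_ne_zero.2 fun h => by rw [← h, map_one] at hy'; exact hy'.false
  refine ⟨Units.mk0 _ hne, O'.valuation.map_one_sub_of_lt hy', ?_⟩
  exact O.valuation.map_sub_eq_of_lt_right (by rwa [map_one])

theorem exists_mem_unitGroup_valuation_eq {u y : Kˣ} (hu : u ∈ O'.unitGroup)
    (hy : 1 ≤ O.valuation (y : K)) (hyu : O.valuation (y : K) ≤ O.valuation (u : K)) :
    ∃ t ∈ O'.unitGroup, O.valuation (t : K) = O.valuation (y : K) := by
  have hu' : O'.valuation (u : K) = 1 := hu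
  rcases lt_trichotomy (O'.valuation (y : K)) 1 with hlt | heq | hgt
  · exact exists_mem_unitGroup_valuation_eq_of_valuation_lt_one hlt hy
  · exact ⟨y, heq, rfl⟩
  -- otherwise `u / y` lies in the maximal ideal of `O'` and has `O`-value at least `1`
  obtain ⟨t, ht, htv⟩ := exists_mem_unitGroup_valuation_eq_of_valuation_lt_one (O := O)
    (y := u / y) (by rwa [Units.val_div_eq_div_val, map_div₀, hu', one_div, inv_lt_one₀
      (O'.valuation.pos_iff.2 y.ne_zero)])
    (by rwa [Units.val_div_eq_div_val, map_div₀, one_le_div₀ (O.valuation.pos_iff.2 y.ne_zero)])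
  refine ⟨u / t, O'.unitGroup.div_mem hu ht, ?_⟩
  rw [Units.val_div_eq_div_val, map_div₀, htv, Units.val_div_eq_div_val, map_div₀,
    div_div_cancel₀ (O.valuation.ne_zero_iff.2 u.ne_zero)]

theorem mem_unitGroup_sup_unitGroup_iff {x : Kˣ} :
    x ∈ O.unitGroup ⊔ O'.unitGroup ↔
      ∃ t ∈ O'.unitGroup, O.valuation (t : K) = O.valuation (x : K) := by
  constructor
  · intro hx
    obtain ⟨w, hw, t, ht, rfl⟩ := Subgroup.mem_sup.1 hx
    refine ⟨t, ht, ?_⟩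
    rw [Units.val_mul, map_mul, (mem_unitGroup_iff O w).1 hw, one_mul]
  · rintro ⟨t, ht, htv⟩
    refine Subgroup.mem_sup.2 ⟨x / t, ?_, t, ht, div_mul_cancel x t⟩
    rw [mem_unitGroup_iff, Units.val_div_eq_div_val, map_div₀, htv,
      div_self (O.valuation.ne_zero_iff.2 x.ne_zero)]

end Convexity

end ValuationSubring

section Residue

open ValuationSubring QuotientGroup

variable {K : Type*} [Field K] {ℓ : ℕ} {O : ValuationSubring K} {T : Subgroup Kˣ}

theorem one_add_mem_of_U1v_le (hT1 : U1v ℓ O ≤ T) {u : Kˣ} {a : K}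
    (ha : O.valuation a < 1) (hu : (u : K) = 1 + a) : u ∈ T :=
  hT1 (Subgroup.mem_sup_left (Subgroup.mem_sup_left (Subgroup.subset_closure ⟨a, ha, hu⟩)))

theorem neg_one_mem_of_U1v_le (hT1 : U1v ℓ O ≤ T) : (-1 : Kˣ) ∈ T :=
  hT1 (Subgroup.mem_sup_left (Subgroup.mem_sup_right (Subgroup.subset_closure rfl)))

theorem principalUnitGroup_le_of_U1v_le (hT1 : U1v ℓ O ≤ T) : O.principalUnitGroup ≤ T :=
  fun u hu => one_add_mem_of_U1v_le hT1 ((O.mem_principalUnitGroup_iff u).1 hu) (by ring)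

theorem mem_Tv_iff (hT1 : U1v ℓ O ≤ T) (u : O.unitGroup) :
    O.unitGroupToResidueFieldUnits u ∈ Tv O T ↔ (u : Kˣ) ∈ T := by
  refine ⟨?_, fun hu => ⟨u, Subgroup.mem_subgroupOf.2 ⟨hu, u.2⟩, rfl⟩⟩
  rintro ⟨t, ht, htu⟩
  -- `u / t` is a principal unit, and those lie in `T`
  have hker : u / t ∈ O.unitGroupToResidueFieldUnits.ker := by
    rw [MonoidHom.mem_ker, map_div, htu, div_self']
  rw [ker_unitGroupToResidueFieldUnits] at hker
  simpa using T.mul_mem (principalUnitGroup_le_of_U1v_le hT1 hker)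
    (Subgroup.mem_subgroupOf.1 ht).1

theorem ker_mk_comp_subtype_eq (hT1 : U1v ℓ O ≤ T) :
    ((mk' T).comp O.unitGroup.subtype).ker =
      ((mk' (Tv O T)).comp O.unitGroupToResidueFieldUnits).ker := by
  ext u
  simp only [MonoidHom.mem_ker, MonoidHom.comp_apply, mk'_apply, eq_one_iff,
    Subgroup.coe_subtype]
  exact (mem_Tv_iff hT1 u).symm

theorem isCyclic_closure_of_valuation_lt_one (hT1 : U1v ℓ O ≤ T) {x y : Kˣ}
    (hx : O.valuation (x : K) < 1) (hy : (y : K) = 1 - x) :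
    IsCyclic (Subgroup.closure {(mk x : Kˣ ⧸ T), mk y}) := by
  refine isCyclic_closure_pair_of_mem_zpowers ?_
  have hyT : y ∈ T :=
    one_add_mem_of_U1v_le hT1 (a := -x) (by rwa [Valuation.map_neg]) (by rw [hy, sub_eq_add_neg])
  rw [(eq_one_iff y).2 hyT]
  exact one_mem _

theorem isCyclic_closure_of_one_lt_valuation (hT1 : U1v ℓ O ≤ T) {x y : Kˣ}
    (hx : 1 < O.valuation (x : K)) (hy : (y : K) = 1 - x) :
    IsCyclic (Subgroup.closure {(mk x : Kˣ ⧸ T), mk y}) := by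
  refine isCyclic_closure_pair_of_mem_zpowers ?_
  -- `-(x⁻¹ * (1 - x)) = 1 - x⁻¹` lies in `1 + m_v`
  have hxy : x⁻¹ * y ∈ T := by
    have hneg : -(x⁻¹ * y) ∈ T := by
      refine one_add_mem_of_U1v_le hT1 (a := -(x : K)⁻¹) ?_ ?_
      · rwa [Valuation.map_neg, map_inv₀, inv_lt_one₀ (O.valuation.pos_iff.2 x.ne_zero)]
      · push_cast
        rw [hy]
        field_simp
        ring
    simpa using T.mul_mem (neg_one_mem_of_U1v_le hT1) hneg
  rw [← QuotientGroup.eq.2 hxy]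
  exact Subgroup.mem_zpowers _

theorem isCyclic_closure_iff_residue (hT1 : U1v ℓ O ≤ T) (u w : O.unitGroup) :
    IsCyclic (Subgroup.closure {(mk (u : Kˣ) : Kˣ ⧸ T), mk (w : Kˣ)}) ↔
      IsCyclic (Subgroup.closure {(mk (O.unitGroupToResidueFieldUnits u) : _ ⧸ Tv O T),
        mk (O.unitGroupToResidueFieldUnits w)}) := by
  have hker := ker_mk_comp_subtype_eq hT1
  have hf : (Subgroup.closure {u, w}).map ((mk' T).comp O.unitGroup.subtype) =
      Subgroup.closure {(mk (u : Kˣ) : Kˣ ⧸ T), mk (w : Kˣ)} := by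
    rw [MonoidHom.map_closure, Set.image_pair]; rfl
  have hg : (Subgroup.closure {u, w}).map ((mk' (Tv O T)).comp O.unitGroupToResidueFieldUnits) =
      Subgroup.closure {(mk (O.unitGroupToResidueFieldUnits u) : _ ⧸ Tv O T),
        mk (O.unitGroupToResidueFieldUnits w)} := by
    rw [MonoidHom.map_closure, Set.image_pair]; rfl
  rw [← hf, ← hg]
  exact ⟨fun _ => isCyclic_map_of_ker_le hker.le _, fun _ => isCyclic_map_of_ker_le hker.ge _⟩

theorem isRigid_iff_isRigid_Tv (hT1 : U1v ℓ O ≤ T) : IsRigid T ↔ IsRigid (Tv O T) := by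
  constructor
  · intro hT ξ hξ hξ1
    obtain ⟨u, rfl⟩ := O.surjective_unitGroupToResidueFieldUnits ξ
    obtain ⟨w, hw, hwres⟩ := exists_unitGroup_eq_one_sub O u (sub_ne_zero.1 hξ1).symm
    have h1u : (1 : K) - (u : Kˣ) ≠ 0 := hw ▸ (w : Kˣ).ne_zero
    have hcyc := hT u ((mem_Tv_iff hT1 u).not.1 hξ) h1u
    rwa [show Units.mk0 _ h1u = (w : Kˣ) from Units.ext hw.symm,
      isCyclic_closure_iff_residue hT1,
      show O.unitGroupToResidueFieldUnits w = Units.mk0 _ hξ1 from Units.ext hwres] at hcyc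
  · intro hTv x hx hx1
    rcases lt_trichotomy (O.valuation (x : K)) 1 with hlt | heq | hgt
    · exact isCyclic_closure_of_valuation_lt_one hT1 hlt rfl
    · let u : O.unitGroup := ⟨x, heq⟩
      have hu : O.unitGroupToResidueFieldUnits u ∉ Tv O T := (mem_Tv_iff hT1 u).not.2 hx
      have hu1 : (1 : ResidueField O) - O.unitGroupToResidueFieldUnits u ≠ 0 := by
        refine sub_ne_zero.2 fun h => hu ?_
        rw [show O.unitGroupToResidueFieldUnits u = 1 from Units.ext h.symm]
        exact one_mem _
      obtain ⟨w, hw, hwres⟩ := exists_unitGroup_eq_one_sub O u (sub_ne_zero.1 hu1).symm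
      have hcyc := hTv _ hu hu1
      rwa [show Units.mk0 _ hu1 = O.unitGroupToResidueFieldUnits w from Units.ext hwres.symm,
        ← isCyclic_closure_iff_residue hT1,
        show (w : Kˣ) = Units.mk0 _ hx1 from Units.ext hw] at hcyc
    · exact isCyclic_closure_of_one_lt_valuation hT1 hgt rfl

end Residue

section Valuative

open ValuationSubring

variable {K : Type*} [Field K] {ℓ : ℕ} {O O' : ValuationSubring K}

/-- `O.unitGroup ⊔ O'.unitGroup` is convex and `ℓ`-divisible, hence equal to `O.unitGroup`. -/
theorem le_of_noLDivConvex (hℓ : ℓ ≠ 0) (hconv : NoLDivConvex ℓ O)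
    (h : O'.unitGroup ≤ Uv ℓ O) : O' ≤ O := by
  set D := O.unitGroup ⊔ O'.unitGroup
  have convex : ∀ x ∈ D, ∀ y : Kˣ, 1 ≤ O.valuation (y : K) →
      O.valuation (y : K) ≤ O.valuation (x : K) → y ∈ D := by
    intro x hx y hy hyx
    obtain ⟨t, ht, htv⟩ := mem_unitGroup_sup_unitGroup_iff.1 hx
    exact mem_unitGroup_sup_unitGroup_iff.2 (exists_mem_unitGroup_valuation_eq ht hy (htv ▸ hyx))
  have root_mem_of_one_le {s t : Kˣ} (ht : t ∈ D)
      (hst : O.valuation (s : K) ^ ℓ = O.valuation (t : K)) (hs : 1 ≤ O.valuation (s : K)) :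
      s ∈ D :=
    convex t ht s hs (hst ▸ le_self_pow hs hℓ)
  have divisible : ∀ x ∈ D, ∃ z ∈ D, z ^ ℓ / x ∈ O.unitGroup := by
    intro x hx
    obtain ⟨t, ht, htv⟩ := mem_unitGroup_sup_unitGroup_iff.1 hx
    obtain ⟨w, hw, _, ⟨s, rfl⟩, hws⟩ := Subgroup.mem_sup.1 (h ht)
    have hst : O.valuation (s : K) ^ ℓ = O.valuation (t : K) := by
      rw [← hws, Units.val_mul, map_mul, (mem_unitGroup_iff O w).1 hw, one_mul]
      simp
    have hs : s ∈ D := by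
      have htD : t ∈ D := Subgroup.mem_sup_right ht
      rcases le_total 1 (O.valuation (s : K)) with hs | hs
      · exact root_mem_of_one_le htD hst hs
      · refine inv_mem_iff.1 (root_mem_of_one_le (t := t⁻¹) (inv_mem htD) ?_ ?_)
        · simp [hst]
        · simpa [one_le_inv₀ (O.valuation.pos_iff.2 s.ne_zero)] using hs
    refine ⟨s, hs, ?_⟩
    rw [mem_unitGroup_iff, Units.val_div_eq_div_val, Units.val_pow_eq_pow_val, map_div₀, map_pow,
      hst, htv, div_self (O.valuation.ne_zero_iff.2 x.ne_zero)]
  rw [← unitGroup_le_unitGroup, ← hconv D le_sup_left convex divisible]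
  exact le_sup_right

variable {T : Subgroup Kˣ}

theorem isValuative_of_isValuative_Tv (hT1 : U1v ℓ O ≤ T) (h : IsValuative (Tv O T)) :
    IsValuative T := by
  obtain ⟨Ob, hOb⟩ := h
  refine ⟨O.comapResidue Ob, fun u hu => ?_⟩
  have huO : u ∈ O.unitGroup := unitGroup_le_unitGroup.2 (comapResidue_le O Ob) hu
  exact (mem_Tv_iff hT1 ⟨u, huO⟩).1 (hOb (unitGroupToResidueFieldUnits_mem_unitGroup O Ob hu))

theorem isValuative_Tv_of_isValuative (hℓ : ℓ ≠ 0) (hconv : NoLDivConvex ℓ O)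
    (hT2 : T ≤ Uv ℓ O) (h : IsValuative T) : IsValuative (Tv O T) := by
  obtain ⟨O', hO'⟩ := h
  have hle : O' ≤ O := le_of_noLDivConvex hℓ hconv (hO'.trans hT2)
  refine ⟨mapResidue hle, fun ξ hξ => ?_⟩
  obtain ⟨u, hu, rfl⟩ := exists_unitGroupToResidueFieldUnits_eq hle hξ
  exact ⟨u, Subgroup.mem_subgroupOf.2 ⟨hO' hu, u.2⟩, rfl⟩

end Valuative

/-- if `Γ_v` has no nontrivial `ℓ`-divisible convex subgroup and
`𝔘_v^1 ≤ T ≤ 𝔘_v`, then `T` is rigid iff `T_v` is rigid, and `T` is valuative iff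
`T_v` is valuative. -/
theorem stmt_10 {K : Type*} [Field K] (ℓ : ℕ) (hℓ : ℓ.Prime) (O : ValuationSubring K)
    (hconv : NoLDivConvex ℓ O) (T : Subgroup Kˣ)
    (hT1 : U1v ℓ O ≤ T) (hT2 : T ≤ Uv ℓ O) :
    (IsRigid T ↔ IsRigid (Tv O T)) ∧ (IsValuative T ↔ IsValuative (Tv O T)) :=
  ⟨isRigid_iff_isRigid_Tv hT1,
    isValuative_Tv_of_isValuative hℓ.ne_zero hconv hT2, isValuative_of_isValuative_Tv hT1⟩
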